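/- Let T = Cat(3,4,3,3,4,3) (a caterpillar tree of length 6, with σ(T) = 6). Then there is no edge-coloring φ of T using colors from {1, …, 6}, in which every two distinct edges at distance at most two receive different colors, such that φ(E₁) = {1,2,3}, φ(E₆) = {4,5,6}, φ(x₀x₁) = 1 and φ(x₆x₇) = 6. In particular T is not 6-two-sided strong edge-pre-colorable. -/
import Mathlib


open SimpleGraph

/-- The degree of a vertex (cardinality of its neighbor set). -/
noncomputable def ndeg {V : Type*} (G : SimpleGraph V) (v : V) : ℕ :=
  (G.neighborSet v).ncard

/-- `σ(G)`: the maximum of `deg x + deg y - 1` over all edges `xy` of `G`. -/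
noncomputable def sigmaG {V : Type*} (G : SimpleGraph V) : ℕ :=
  sSup {m | ∃ x y, G.Adj x y ∧ m = ndeg G x + ndeg G y - 1}

/-- The maximum degree `Δ(G)`. -/
noncomputable def maxDeg {V : Type*} (G : SimpleGraph V) : ℕ :=
  sSup (Set.range (ndeg G))

/-- Two edges are at distance at most two: they share an endpoint, or an endpoint of
one is adjacent to an endpoint of the other. -/
def EdgesNear {V : Type*} (G : SimpleGraph V) (e f : Sym2 V) : Prop :=
  ∃ u v, u ∈ e ∧ v ∈ f ∧ (u = v ∨ G.Adj u v)

/-- A strong edge-coloring: every two distinct edges at distance at most two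
receive different colors. -/
def IsStrongEdgeColoring {V α : Type*} (G : SimpleGraph V) (φ : Sym2 V → α) : Prop :=
  ∀ e ∈ G.edgeSet, ∀ f ∈ G.edgeSet, e ≠ f → EdgesNear G e f → φ e ≠ φ f

/-- The strong chromatic index `χ'ₛ(G)`: the least `k` such that `G` has a strong
edge-coloring with colors `0, …, k-1`. -/
noncomputable def strongChromaticIndex {V : Type*} (G : SimpleGraph V) : ℕ :=
  sInf {k | ∃ φ : Sym2 V → ℕ, (∀ e ∈ G.edgeSet, φ e < k) ∧ IsStrongEdgeColoring G φ}

/-- The set of edges incident with a vertex `v`. -/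
def Einc {V : Type*} (G : SimpleGraph V) (v : V) : Set (Sym2 V) :=
  {e ∈ G.edgeSet | v ∈ e}
/-- The vertex type of the caterpillar tree `Cat(d 1, …, d ℓ)`: the spine
`x_0, x_1, …, x_{ℓ+1}` (as `Fin (ℓ+2)`) together with `d (i+1) - 2` pendant leaves
attached to the spine vertex `x_{i+1}` for each `i : Fin ℓ`. -/
abbrev CatV (ℓ : ℕ) (d : ℕ → ℕ) : Type :=
  Fin (ℓ + 2) ⊕ (Σ i : Fin ℓ, Fin (d (i.val + 1) - 2))

/-- Generating relation for the caterpillar: consecutive spine vertices are adjacent,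
and each leaf in the `i`-th leaf group is adjacent to the spine vertex `x_{i+1}`. -/
def CatRel (ℓ : ℕ) (d : ℕ → ℕ) : CatV ℓ d → CatV ℓ d → Prop
  | Sum.inl i, Sum.inl j => (j : ℕ) = (i : ℕ) + 1
  | Sum.inr p, Sum.inl k => (k : ℕ) = (p.1 : ℕ) + 1
  | _, _ => False

/-- The caterpillar tree `Cat(d 1, …, d ℓ)` with spine `x_0, …, x_{ℓ+1}`, in which
the spine vertex `x_i` has degree `d i` for `1 ≤ i ≤ ℓ` (provided `d i ≥ 2`). -/
def Cat (ℓ : ℕ) (d : ℕ → ℕ) : SimpleGraph (CatV ℓ d) :=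
  SimpleGraph.fromRel (CatRel ℓ d)

/-- There exists a strong edge-coloring `φ` of `Cat ℓ d` using colors from `C` with
`φ(E 1) = C₁`, `φ(E ℓ) = Cl`, `φ(x₀x₁) = α₀` and `φ(x_ℓ x_{ℓ+1}) = αl`. -/
def CatPrecolorExists (ℓ : ℕ) (d : ℕ → ℕ) (C C₁ Cl : Finset ℕ) (α₀ αl : ℕ) : Prop :=
  ∃ φ : Sym2 (CatV ℓ d) → ℕ,
    (∀ e ∈ (Cat ℓ d).edgeSet, φ e ∈ C) ∧
    IsStrongEdgeColoring (Cat ℓ d) φ ∧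
    φ '' Einc (Cat ℓ d) (Sum.inl ⟨1, by omega⟩) = ↑C₁ ∧
    φ '' Einc (Cat ℓ d) (Sum.inl ⟨ℓ, by omega⟩) = ↑Cl ∧
    φ s(Sum.inl ⟨0, by omega⟩, Sum.inl ⟨1, by omega⟩) = α₀ ∧
    φ s(Sum.inl ⟨ℓ, by omega⟩, Sum.inl ⟨ℓ + 1, by omega⟩) = αl

/-- `Cat ℓ d` is `κ`-two-sided strong edge-pre-colorable: for every `κ`-set `C` of colors,
all `C₁, Cl ⊆ C` with `|C₁| = d 1`, `|Cl| = d ℓ`, and all `α₀ ∈ C₁`, `αl ∈ Cl`, there is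
a strong edge-coloring `φ` of `Cat ℓ d` with colors from `C` such that `φ(E 1) = C₁`,
`φ(E ℓ) = Cl`, `φ(x₀x₁) = α₀` and `φ(x_ℓ x_{ℓ+1}) = αl`. -/
def TwoSidedPrecolorable (ℓ : ℕ) (d : ℕ → ℕ) (κ : ℕ) : Prop :=
  ∀ C C₁ Cl : Finset ℕ, C.card = κ → C₁ ⊆ C → Cl ⊆ C →
    C₁.card = d 1 → Cl.card = d ℓ →
    ∀ α₀ ∈ C₁, ∀ αl ∈ Cl, CatPrecolorExists ℓ d C C₁ Cl α₀ αl

/-- `ℓ_σ` from the refined key lemma: `ℓ_5 = 8`, `ℓ_6 = ℓ_7 = 7`, `ℓ_σ = σ` for `σ ≥ 8`. -/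
def ellSigma (s : ℕ) : ℕ :=
  if s = 5 then 8 else if s ≤ 7 then 7 else s

abbrev Dd : ℕ → ℕ := fun i => if i = 2 ∨ i = 5 then 4 else 3

instance : DecidableRel (CatRel 6 Dd) := fun a b =>
  match a, b with
  | Sum.inl i, Sum.inl j => inferInstanceAs (Decidable ((j : ℕ) = (i : ℕ) + 1))
  | Sum.inr p, Sum.inl k => inferInstanceAs (Decidable ((k : ℕ) = (p.1 : ℕ) + 1))
  | Sum.inl _, Sum.inr _ => inferInstanceAs (Decidable False)
  | Sum.inr _, Sum.inr _ => inferInstanceAs (Decidable False)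

instance : DecidableRel (Cat 6 Dd).Adj := fun a b =>
  inferInstanceAs (Decidable (a ≠ b ∧ (CatRel 6 Dd a b ∨ CatRel 6 Dd b a)))

def X0 : CatV 6 Dd := Sum.inl ⟨0, by omega⟩
def X1 : CatV 6 Dd := Sum.inl ⟨1, by omega⟩
def X2 : CatV 6 Dd := Sum.inl ⟨2, by omega⟩
def X3 : CatV 6 Dd := Sum.inl ⟨3, by omega⟩
def X4 : CatV 6 Dd := Sum.inl ⟨4, by omega⟩
def X5 : CatV 6 Dd := Sum.inl ⟨5, by omega⟩
def X6 : CatV 6 Dd := Sum.inl ⟨6, by omega⟩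
def X7 : CatV 6 Dd := Sum.inl ⟨7, by omega⟩

def Lf (i j : ℕ) (hi : i < 6) (hj : j < Dd (i + 1) - 2) : CatV 6 Dd :=
  Sum.inr ⟨⟨i, hi⟩, ⟨j, hj⟩⟩

def L1 : CatV 6 Dd := Lf 0 0 (by omega) (by decide)
def L2a : CatV 6 Dd := Lf 1 0 (by omega) (by decide)
def L2b : CatV 6 Dd := Lf 1 1 (by omega) (by decide)
def L5a : CatV 6 Dd := Lf 4 0 (by omega) (by decide)
def L5b : CatV 6 Dd := Lf 4 1 (by omega) (by decide)
def L6 : CatV 6 Dd := Lf 5 0 (by omega) (by decide)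

lemma cover_low (a b c p : ℕ) (ha : a = 1 ∨ a = 2 ∨ a = 3) (hb : b = 1 ∨ b = 2 ∨ b = 3)
    (hc : c = 1 ∨ c = 2 ∨ c = 3) (hab : a ≠ b) (hac : a ≠ c) (hbc : b ≠ c)
    (hp : 1 ≤ p ∧ p ≤ 6) (hpa : p ≠ a) (hpb : p ≠ b) (hpc : p ≠ c) :
    4 ≤ p ∧ p ≤ 6 := by omega
lemma cover_high (a b c p : ℕ) (ha : a = 4 ∨ a = 5 ∨ a = 6) (hb : b = 4 ∨ b = 5 ∨ b = 6)
    (hc : c = 4 ∨ c = 5 ∨ c = 6) (hab : a ≠ b) (hac : a ≠ c) (hbc : b ≠ c)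
    (hp : 1 ≤ p ∧ p ≤ 6) (hpa : p ≠ a) (hpb : p ≠ b) (hpc : p ≠ c) :
    1 ≤ p ∧ p ≤ 3 := by omega
lemma final_contra (p q r x y z m : ℕ)
    (hp : 4 ≤ p ∧ p ≤ 6) (hq : 4 ≤ q ∧ q ≤ 6) (hr : 4 ≤ r ∧ r ≤ 6)
    (hpq : p ≠ q) (hpr : p ≠ r) (hqr : q ≠ r)
    (hx : 1 ≤ x ∧ x ≤ 3) (hy : 1 ≤ y ∧ y ≤ 3) (hz : 1 ≤ z ∧ z ≤ 3)
    (hxy : x ≠ y) (hxz : x ≠ z) (hyz : y ≠ z)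
    (hm : 1 ≤ m ∧ m ≤ 6) (h1 : m ≠ p) (h2 : m ≠ q) (h3 : m ≠ r)
    (h4 : m ≠ x) (h5 : m ≠ y) (h6 : m ≠ z) : False := by omega

set_option maxHeartbeats 1000000 in
lemma main_aux : ¬ CatPrecolorExists 6 Dd
    (Finset.Icc 1 6) ({1, 2, 3} : Finset ℕ) ({4, 5, 6} : Finset ℕ) 1 6 := by
  rintro ⟨φ, hmem, hstrong, hE1, hE6, h01, h67⟩
  have h01' : φ s(X0, X1) = 1 := h01
  have h67' : φ s(X6, X7) = 6 := h67
  have K : ∀ (a b c d : CatV 6 Dd), (Cat 6 Dd).Adj a b → (Cat 6 Dd).Adj c d →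
      s(a, b) ≠ s(c, d) → ∀ u v, u ∈ s(a, b) → v ∈ s(c, d) →
      (u = v ∨ (Cat 6 Dd).Adj u v) → φ s(a, b) ≠ φ s(c, d) :=
    fun a b c d h1 h2 hne u v hu hv huv =>
      hstrong _ ((SimpleGraph.mem_edgeSet (Cat 6 Dd)).2 h1) _
        ((SimpleGraph.mem_edgeSet (Cat 6 Dd)).2 h2) hne ⟨u, v, hu, hv, huv⟩
  have B : ∀ (a b : CatV 6 Dd), (Cat 6 Dd).Adj a b →
      1 ≤ φ s(a, b) ∧ φ s(a, b) ≤ 6 := fun a b h =>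
    Finset.mem_Icc.1 (hmem _ ((SimpleGraph.mem_edgeSet (Cat 6 Dd)).2 h))
  have M1 : ∀ (a : CatV 6 Dd), (Cat 6 Dd).Adj a X1 →
      φ s(a, X1) = 1 ∨ φ s(a, X1) = 2 ∨ φ s(a, X1) = 3 := by
    intro a h
    have : φ s(a, X1) ∈ φ '' Einc (Cat 6 Dd) (Sum.inl ⟨1, by omega⟩) :=
      ⟨s(a, X1), ⟨(SimpleGraph.mem_edgeSet (Cat 6 Dd)).2 h, Sym2.mem_mk_right a X1⟩, rfl⟩
    rw [hE1] at this
    simpa using this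
  have M6 : ∀ (a : CatV 6 Dd), (Cat 6 Dd).Adj a X6 →
      φ s(a, X6) = 4 ∨ φ s(a, X6) = 5 ∨ φ s(a, X6) = 6 := by
    intro a h
    have : φ s(a, X6) ∈ φ '' Einc (Cat 6 Dd) (Sum.inl ⟨6, by omega⟩) :=
      ⟨s(a, X6), ⟨(SimpleGraph.mem_edgeSet (Cat 6 Dd)).2 h, Sym2.mem_mk_right a X6⟩, rfl⟩
    rw [hE6] at this
    simpa using this
  have aX0X1 : (Cat 6 Dd).Adj X0 X1 := by decide
  have aX2X1 : (Cat 6 Dd).Adj X2 X1 := by decide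
  have aL1X1 : (Cat 6 Dd).Adj L1 X1 := by decide
  have aX2X3 : (Cat 6 Dd).Adj X2 X3 := by decide
  have aX2L2a : (Cat 6 Dd).Adj X2 L2a := by decide
  have aX2L2b : (Cat 6 Dd).Adj X2 L2b := by decide
  have aX3X4 : (Cat 6 Dd).Adj X3 X4 := by decide
  have aX4X5 : (Cat 6 Dd).Adj X4 X5 := by decide
  have aX5L5a : (Cat 6 Dd).Adj X5 L5a := by decide
  have aX5L5b : (Cat 6 Dd).Adj X5 L5b := by decide
  have aX5X6 : (Cat 6 Dd).Adj X5 X6 := by decide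
  have aX6X7 : (Cat 6 Dd).Adj X6 X7 := by decide
  have aL6X6 : (Cat 6 Dd).Adj L6 X6 := by decide
  have aX1X2 : (Cat 6 Dd).Adj X1 X2 := by decide
  have aX3X2 : (Cat 6 Dd).Adj X3 X2 := by decide
  have d1a : φ s(X0, X1) ≠ φ s(X2, X1) :=
    K X0 X1 X2 X1 aX0X1 aX2X1 (by decide) X1 X1 (Sym2.mem_mk_right X0 X1) (Sym2.mem_mk_right X2 X1) (Or.inl rfl)
  have d1b : φ s(X0, X1) ≠ φ s(L1, X1) :=
    K X0 X1 L1 X1 aX0X1 aL1X1 (by decide) X1 X1 (Sym2.mem_mk_right X0 X1) (Sym2.mem_mk_right L1 X1) (Or.inl rfl)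
  have d1c : φ s(X2, X1) ≠ φ s(L1, X1) :=
    K X2 X1 L1 X1 aX2X1 aL1X1 (by decide) X1 X1 (Sym2.mem_mk_right X2 X1) (Sym2.mem_mk_right L1 X1) (Or.inl rfl)
  have d6a : φ s(X5, X6) ≠ φ s(X6, X7) :=
    K X5 X6 X6 X7 aX5X6 aX6X7 (by decide) X6 X6 (Sym2.mem_mk_right X5 X6) (Sym2.mem_mk_left X6 X7) (Or.inl rfl)
  have d6b : φ s(X5, X6) ≠ φ s(L6, X6) :=
    K X5 X6 L6 X6 aX5X6 aL6X6 (by decide) X6 X6 (Sym2.mem_mk_right X5 X6) (Sym2.mem_mk_right L6 X6) (Or.inl rfl)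
  have d6c : φ s(X6, X7) ≠ φ s(L6, X6) :=
    K X6 X7 L6 X6 aX6X7 aL6X6 (by decide) X6 X6 (Sym2.mem_mk_left X6 X7) (Sym2.mem_mk_right L6 X6) (Or.inl rfl)
  have p1 : φ s(X2, X3) ≠ φ s(X2, L2a) :=
    K X2 X3 X2 L2a aX2X3 aX2L2a (by decide) X2 X2 (Sym2.mem_mk_left X2 X3) (Sym2.mem_mk_left X2 L2a) (Or.inl rfl)
  have p2 : φ s(X2, X3) ≠ φ s(X2, L2b) :=
    K X2 X3 X2 L2b aX2X3 aX2L2b (by decide) X2 X2 (Sym2.mem_mk_left X2 X3) (Sym2.mem_mk_left X2 L2b) (Or.inl rfl)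
  have p3 : φ s(X2, L2a) ≠ φ s(X2, L2b) :=
    K X2 L2a X2 L2b aX2L2a aX2L2b (by decide) X2 X2 (Sym2.mem_mk_left X2 L2a) (Sym2.mem_mk_left X2 L2b) (Or.inl rfl)
  have q1 : φ s(X2, X3) ≠ φ s(X0, X1) :=
    K X2 X3 X0 X1 aX2X3 aX0X1 (by decide) X2 X1 (Sym2.mem_mk_left X2 X3) (Sym2.mem_mk_right X0 X1) (Or.inr aX2X1)
  have q2 : φ s(X2, X3) ≠ φ s(X2, X1) :=
    K X2 X3 X2 X1 aX2X3 aX2X1 (by decide) X2 X2 (Sym2.mem_mk_left X2 X3) (Sym2.mem_mk_left X2 X1) (Or.inl rfl)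
  have q3 : φ s(X2, X3) ≠ φ s(L1, X1) :=
    K X2 X3 L1 X1 aX2X3 aL1X1 (by decide) X2 X1 (Sym2.mem_mk_left X2 X3) (Sym2.mem_mk_right L1 X1) (Or.inr aX2X1)
  have q4 : φ s(X2, L2a) ≠ φ s(X0, X1) :=
    K X2 L2a X0 X1 aX2L2a aX0X1 (by decide) X2 X1 (Sym2.mem_mk_left X2 L2a) (Sym2.mem_mk_right X0 X1) (Or.inr aX2X1)
  have q5 : φ s(X2, L2a) ≠ φ s(X2, X1) :=
    K X2 L2a X2 X1 aX2L2a aX2X1 (by decide) X2 X2 (Sym2.mem_mk_left X2 L2a) (Sym2.mem_mk_left X2 X1) (Or.inl rfl)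
  have q6 : φ s(X2, L2a) ≠ φ s(L1, X1) :=
    K X2 L2a L1 X1 aX2L2a aL1X1 (by decide) X2 X1 (Sym2.mem_mk_left X2 L2a) (Sym2.mem_mk_right L1 X1) (Or.inr aX2X1)
  have q7 : φ s(X2, L2b) ≠ φ s(X0, X1) :=
    K X2 L2b X0 X1 aX2L2b aX0X1 (by decide) X2 X1 (Sym2.mem_mk_left X2 L2b) (Sym2.mem_mk_right X0 X1) (Or.inr aX2X1)
  have q8 : φ s(X2, L2b) ≠ φ s(X2, X1) :=
    K X2 L2b X2 X1 aX2L2b aX2X1 (by decide) X2 X2 (Sym2.mem_mk_left X2 L2b) (Sym2.mem_mk_left X2 X1) (Or.inl rfl)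
  have q9 : φ s(X2, L2b) ≠ φ s(L1, X1) :=
    K X2 L2b L1 X1 aX2L2b aL1X1 (by decide) X2 X1 (Sym2.mem_mk_left X2 L2b) (Sym2.mem_mk_right L1 X1) (Or.inr aX2X1)
  have r1 : φ s(X4, X5) ≠ φ s(X5, L5a) :=
    K X4 X5 X5 L5a aX4X5 aX5L5a (by decide) X5 X5 (Sym2.mem_mk_right X4 X5) (Sym2.mem_mk_left X5 L5a) (Or.inl rfl)
  have r2 : φ s(X4, X5) ≠ φ s(X5, L5b) :=
    K X4 X5 X5 L5b aX4X5 aX5L5b (by decide) X5 X5 (Sym2.mem_mk_right X4 X5) (Sym2.mem_mk_left X5 L5b) (Or.inl rfl)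
  have r3 : φ s(X5, L5a) ≠ φ s(X5, L5b) :=
    K X5 L5a X5 L5b aX5L5a aX5L5b (by decide) X5 X5 (Sym2.mem_mk_left X5 L5a) (Sym2.mem_mk_left X5 L5b) (Or.inl rfl)
  have s1 : φ s(X4, X5) ≠ φ s(X5, X6) :=
    K X4 X5 X5 X6 aX4X5 aX5X6 (by decide) X5 X5 (Sym2.mem_mk_right X4 X5) (Sym2.mem_mk_left X5 X6) (Or.inl rfl)
  have s2 : φ s(X4, X5) ≠ φ s(X6, X7) :=
    K X4 X5 X6 X7 aX4X5 aX6X7 (by decide) X5 X6 (Sym2.mem_mk_right X4 X5) (Sym2.mem_mk_left X6 X7) (Or.inr aX5X6)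
  have s3 : φ s(X4, X5) ≠ φ s(L6, X6) :=
    K X4 X5 L6 X6 aX4X5 aL6X6 (by decide) X5 X6 (Sym2.mem_mk_right X4 X5) (Sym2.mem_mk_right L6 X6) (Or.inr aX5X6)
  have s4 : φ s(X5, L5a) ≠ φ s(X5, X6) :=
    K X5 L5a X5 X6 aX5L5a aX5X6 (by decide) X5 X5 (Sym2.mem_mk_left X5 L5a) (Sym2.mem_mk_left X5 X6) (Or.inl rfl)
  have s5 : φ s(X5, L5a) ≠ φ s(X6, X7) :=
    K X5 L5a X6 X7 aX5L5a aX6X7 (by decide) X5 X6 (Sym2.mem_mk_left X5 L5a) (Sym2.mem_mk_left X6 X7) (Or.inr aX5X6)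
  have s6 : φ s(X5, L5a) ≠ φ s(L6, X6) :=
    K X5 L5a L6 X6 aX5L5a aL6X6 (by decide) X5 X6 (Sym2.mem_mk_left X5 L5a) (Sym2.mem_mk_right L6 X6) (Or.inr aX5X6)
  have s7 : φ s(X5, L5b) ≠ φ s(X5, X6) :=
    K X5 L5b X5 X6 aX5L5b aX5X6 (by decide) X5 X5 (Sym2.mem_mk_left X5 L5b) (Sym2.mem_mk_left X5 X6) (Or.inl rfl)
  have s8 : φ s(X5, L5b) ≠ φ s(X6, X7) :=
    K X5 L5b X6 X7 aX5L5b aX6X7 (by decide) X5 X6 (Sym2.mem_mk_left X5 L5b) (Sym2.mem_mk_left X6 X7) (Or.inr aX5X6)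
  have s9 : φ s(X5, L5b) ≠ φ s(L6, X6) :=
    K X5 L5b L6 X6 aX5L5b aL6X6 (by decide) X5 X6 (Sym2.mem_mk_left X5 L5b) (Sym2.mem_mk_right L6 X6) (Or.inr aX5X6)
  have t1 : φ s(X3, X4) ≠ φ s(X2, X3) :=
    K X3 X4 X2 X3 aX3X4 aX2X3 (by decide) X3 X3 (Sym2.mem_mk_left X3 X4) (Sym2.mem_mk_right X2 X3) (Or.inl rfl)
  have t2 : φ s(X3, X4) ≠ φ s(X2, L2a) :=
    K X3 X4 X2 L2a aX3X4 aX2L2a (by decide) X3 X2 (Sym2.mem_mk_left X3 X4) (Sym2.mem_mk_left X2 L2a) (Or.inr aX3X2)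
  have t3 : φ s(X3, X4) ≠ φ s(X2, L2b) :=
    K X3 X4 X2 L2b aX3X4 aX2L2b (by decide) X3 X2 (Sym2.mem_mk_left X3 X4) (Sym2.mem_mk_left X2 L2b) (Or.inr aX3X2)
  have t4 : φ s(X3, X4) ≠ φ s(X4, X5) :=
    K X3 X4 X4 X5 aX3X4 aX4X5 (by decide) X4 X4 (Sym2.mem_mk_right X3 X4) (Sym2.mem_mk_left X4 X5) (Or.inl rfl)
  have t5 : φ s(X3, X4) ≠ φ s(X5, L5a) :=
    K X3 X4 X5 L5a aX3X4 aX5L5a (by decide) X4 X5 (Sym2.mem_mk_right X3 X4) (Sym2.mem_mk_left X5 L5a) (Or.inr aX4X5)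
  have t6 : φ s(X3, X4) ≠ φ s(X5, L5b) :=
    K X3 X4 X5 L5b aX3X4 aX5L5b (by decide) X4 X5 (Sym2.mem_mk_right X3 X4) (Sym2.mem_mk_left X5 L5b) (Or.inr aX4X5)
  have m12 := M1 X2 aX2X1
  have mF1 := M1 L1 aL1X1
  have m56 := M6 X5 aX5X6
  have mF6 := M6 L6 aL6X6
  have b23 := B X2 X3 aX2X3
  have b2a := B X2 L2a aX2L2a
  have b2b := B X2 L2b aX2L2b
  have b45 := B X4 X5 aX4X5
  have b5a := B X5 L5a aX5L5a
  have b5b := B X5 L5b aX5L5b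
  have b34 := B X3 X4 aX3X4
  have L23 := cover_low _ _ _ _ (Or.inl h01') m12 mF1 d1a d1b d1c b23 q1 q2 q3
  have L2A := cover_low _ _ _ _ (Or.inl h01') m12 mF1 d1a d1b d1c b2a q4 q5 q6
  have L2B := cover_low _ _ _ _ (Or.inl h01') m12 mF1 d1a d1b d1c b2b q7 q8 q9
  have L45 := cover_high _ _ _ _ m56 (Or.inr (Or.inr h67')) mF6 d6a d6b d6c b45 s1 s2 s3
  have L5A := cover_high _ _ _ _ m56 (Or.inr (Or.inr h67')) mF6 d6a d6b d6c b5a s4 s5 s6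
  have L5B := cover_high _ _ _ _ m56 (Or.inr (Or.inr h67')) mF6 d6a d6b d6c b5b s7 s8 s9
  exact final_contra _ _ _ _ _ _ _ L23 L2A L2B p1 p2 p3 L45 L5A L5B r1 r2 r3 b34 t1 t2 t3 t4 t5 t6

theorem not_twoSided_343343 :
    ¬ CatPrecolorExists 6 (fun i => if i = 2 ∨ i = 5 then 4 else 3)
        (Finset.Icc 1 6) ({1, 2, 3} : Finset ℕ) ({4, 5, 6} : Finset ℕ) 1 6 ∧
    ¬ TwoSidedPrecolorable 6 (fun i => if i = 2 ∨ i = 5 then 4 else 3) 6 := by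
  constructor
  · exact main_aux
  · intro h
    exact main_aux (h (Finset.Icc 1 6) {1, 2, 3} {4, 5, 6} (by decide) (by decide)
      (by decide) (by decide) (by decide) 1 (by decide) 6 (by decide))
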